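/- Let Γ ⊆ ℝⁿ be an n-attractor. Then the complement Γᶜ = ℝⁿ ∖ Γ is an open n-set: there exists c > 0 such that c·rⁿ ≤ |Γᶜ ∩ B(x,r)| for all x ∈ Γᶜ and all 0 < r ≤ 1. -/

import Mathlib

/-!
Under the open set condition with `∑ ρᵢⁿ = 1`, the open set `O` lies inside `Γ`: the images of `O`
under the Hutchinson operator fill `O` up to a null set, yet they shrink onto `Γ`. Hence `Γ` has
interior and positive volume, and the same equality of volumes makes the pieces `s_w Γ`, `s_w' Γ`
of two words neither of which is a prefix of the other meet in a null set.

Fix a word `v` whose map `s_v` sends the `1`-neighbourhood of `Γ` into a ball contained in `Γ`.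
Let `x ∉ Γ` and `r ≤ 1`. If `closedBall x r` misses `Γ`, its whole volume counts. Otherwise
`s_v x ∈ Γ \ s_v Γ`, so a piece of `Γ` of diameter `≈ ρ_v r` at `s_v x` has a word incomparable
with `v` and meets `s_v Γ` in a null set. Pulling it back by `s_v` gives a subset of
`Γᶜ ∩ closedBall x r` of volume `≳ rⁿ |Γ|`, uniformly in `v`.
-/

open Metric MeasureTheory Set Module
open scoped Pointwise

section Similarity

variable {X : Type*} [MetricSpace X] {r : ℝ} {f g : X → X}

def IsSimilarity (r : ℝ) (f : X → X) : Prop := ∀ x y, dist (f x) (f y) = r * dist x y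

theorem IsSimilarity.comp {r' : ℝ} (hf : IsSimilarity r f) (hg : IsSimilarity r' g) :
    IsSimilarity (r * r') (f ∘ g) := fun x y => by
  rw [Function.comp_apply, Function.comp_apply, hf, hg, mul_assoc]

theorem IsSimilarity.injective (hr : 0 < r) (hf : IsSimilarity r f) : Function.Injective f :=
  fun x y hxy => by
    have h := hf x y
    rw [hxy, dist_self, eq_comm, mul_eq_zero] at h
    exact dist_eq_zero.1 (h.resolve_left hr.ne')

theorem IsSimilarity.image_subset_closedBall (hr : 0 ≤ r) (hf : IsSimilarity r f) {A : Set X}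
    (hA : Bornology.IsBounded A) {x : X} (hx : x ∈ A) : f '' A ⊆ closedBall (f x) (r * diam A) := by
  rintro _ ⟨y, hy, rfl⟩
  rw [mem_closedBall, hf]
  exact mul_le_mul_of_nonneg_left (dist_le_diam_of_mem hA hy hx) hr

end Similarity

section InnerProductSpace

variable {E : Type*} [NormedAddCommGroup E] [InnerProductSpace ℝ E] [FiniteDimensional ℝ E]
  {r : ℝ} {f : E → E}

theorem IsSimilarity.exists_linearIsometryEquiv (hr : 0 < r) (hf : IsSimilarity r f) :
    ∃ φ : E ≃ₗᵢ[ℝ] E, ∀ x, f x = f 0 + r • φ x := by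
  have hg : Isometry fun x => r⁻¹ • (f x - f 0) := Isometry.of_dist_eq fun x y => by
    rw [dist_eq_norm, ← smul_sub, sub_sub_sub_cancel_right, norm_smul, ← dist_eq_norm, hf,
      Real.norm_of_nonneg (inv_nonneg.2 hr.le), inv_mul_cancel_left₀ hr.ne']
  set A := hg.affineIsometryOfStrictConvexSpace
  refine ⟨A.linearIsometry.toLinearIsometryEquiv rfl, fun x => ?_⟩
  have hA : A.linearIsometry x = r⁻¹ • (f x - f 0) := by
    simpa [A] using (A.map_vadd 0 x).symm
  rw [LinearIsometry.coe_toLinearIsometryEquiv, hA, smul_inv_smul₀ hr.ne', add_sub_cancel]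

theorem IsSimilarity.exists_homeomorph_eq (hr : 0 < r) (hf : IsSimilarity r f) :
    ∃ h : E ≃ₜ E, ⇑h = f := by
  obtain ⟨φ, hφ⟩ := hf.exists_linearIsometryEquiv hr
  exact ⟨φ.toHomeomorph.trans ((Homeomorph.smulOfNeZero r hr.ne').trans (Homeomorph.addLeft (f 0))),
    funext fun x => (hφ x).symm⟩

theorem IsSimilarity.surjective (hr : 0 < r) (hf : IsSimilarity r f) : Function.Surjective f := by
  obtain ⟨h, rfl⟩ := hf.exists_homeomorph_eq hr
  exact h.surjective

theorem IsSimilarity.compl_image_inter_closedBall_subset (hr : 0 < r) (hf : IsSimilarity r f)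
    (A : Set E) (x : E) (δ : ℝ) :
    (f '' A)ᶜ ∩ closedBall (f x) (r * δ) ⊆ f '' (Aᶜ ∩ closedBall x δ) := by
  rintro y ⟨hyA, hy⟩
  obtain ⟨ξ, rfl⟩ := hf.surjective hr y
  refine ⟨ξ, ⟨fun hξ => hyA (mem_image_of_mem f hξ), ?_⟩, rfl⟩
  rw [mem_closedBall, hf] at hy
  exact mem_closedBall.2 (le_of_mul_le_mul_left hy hr)

variable [MeasurableSpace E] [BorelSpace E]

theorem IsSimilarity.measurableEmbedding (hr : 0 < r) (hf : IsSimilarity r f) :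
    MeasurableEmbedding f := by
  obtain ⟨h, rfl⟩ := hf.exists_homeomorph_eq hr
  exact h.measurableEmbedding

theorem IsSimilarity.volume_image (hr : 0 < r) (hf : IsSimilarity r f) (A : Set E) :
    volume (f '' A) = ENNReal.ofReal (r ^ finrank ℝ E) * volume A := by
  obtain ⟨φ, hφ⟩ := hf.exists_linearIsometryEquiv hr
  have hfA : f '' A = f 0 +ᵥ r • φ '' A := by
    rw [← image_smul, ← image_vadd, image_image, image_image]
    exact image_congr fun x _ => hφ x
  rw [hfA, measure_vadd, Measure.addHaar_smul_of_nonneg _ hr.le, φ.image_eq_preimage_symm,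
    φ.symm.measurePreserving.measure_preimage_emb φ.symm.toHomeomorph.measurableEmbedding]

end InnerProductSpace

section Words

variable {X ι : Type*} {s : ι → X → X} {ρ : ι → ℝ} {Γ : Set X} {w v : List ι} {i : ι}

theorem image_subset_of_eq_iUnion (hattr : Γ = ⋃ i, s i '' Γ) (i : ι) : s i '' Γ ⊆ Γ :=
  (subset_iUnion (fun i => s i '' Γ) i).trans hattr.symm.subset

def wordMap (s : ι → X → X) (w : List ι) : X → X := w.foldr (fun i g => s i ∘ g) id

def wordRatio (ρ : ι → ℝ) (w : List ι) : ℝ := (w.map ρ).prod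

@[simp] theorem wordMap_nil : wordMap s [] = id := rfl

@[simp] theorem wordMap_cons : wordMap s (i :: w) = s i ∘ wordMap s w := rfl

theorem wordMap_append : wordMap s (w ++ v) = wordMap s w ∘ wordMap s v := by
  induction w with
  | nil => rfl
  | cons i w ih => rw [List.cons_append, wordMap_cons, wordMap_cons, ih, Function.comp_assoc]

@[simp] theorem wordRatio_nil : wordRatio ρ [] = 1 := rfl

@[simp] theorem wordRatio_cons : wordRatio ρ (i :: w) = ρ i * wordRatio ρ w := by
  simp [wordRatio]

theorem wordRatio_append : wordRatio ρ (w ++ v) = wordRatio ρ w * wordRatio ρ v := by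
  simp [wordRatio]

theorem wordRatio_pos (hρ : ∀ i, 0 < ρ i) (w : List ι) : 0 < wordRatio ρ w :=
  List.prod_pos fun _ hx => by
    obtain ⟨i, -, rfl⟩ := List.mem_map.1 hx
    exact hρ i

theorem wordRatio_le_one (hρ : ∀ i, ρ i ∈ Ioo 0 1) (w : List ι) : wordRatio ρ w ≤ 1 := by
  induction w with
  | nil => simp
  | cons i w ih =>
    rw [wordRatio_cons]
    exact mul_le_one₀ (hρ i).2.le (wordRatio_pos (fun i => (hρ i).1) w).le ih

theorem wordRatio_le_of_prefix (hρ : ∀ i, ρ i ∈ Ioo 0 1) (h : w <+: v) :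
    wordRatio ρ v ≤ wordRatio ρ w := by
  obtain ⟨t, rfl⟩ := h
  rw [wordRatio_append]
  exact mul_le_of_le_one_right (wordRatio_pos (fun i => (hρ i).1) w).le (wordRatio_le_one hρ t)

theorem wordMap_image_subset (hinv : ∀ i, s i '' Γ ⊆ Γ) (w : List ι) : wordMap s w '' Γ ⊆ Γ := by
  induction w with
  | nil => simp
  | cons i w ih =>
    rw [wordMap_cons, image_comp]
    exact (image_mono ih).trans (hinv i)

theorem wordMap_image_subset_of_prefix (hinv : ∀ i, s i '' Γ ⊆ Γ) (h : w <+: v) :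
    wordMap s v '' Γ ⊆ wordMap s w '' Γ := by
  obtain ⟨t, rfl⟩ := h
  rw [wordMap_append, image_comp]
  exact image_mono (wordMap_image_subset hinv t)

theorem IsSimilarity.wordMap [MetricSpace X] (hsim : ∀ i, IsSimilarity (ρ i) (s i)) (w : List ι) :
    IsSimilarity (wordRatio ρ w) (wordMap s w) := by
  induction w with
  | nil => intro x y; simp
  | cons i w ih => exact (hsim i).comp ih

theorem exists_word_mem_image [Finite ι] (hρ : ∀ i, ρ i ∈ Ioo 0 1) (hattr : Γ = ⋃ i, s i '' Γ)
    {ρmin : ℝ} (hρmin : ∀ i, ρmin ≤ ρ i) {p : X} (hp : p ∈ Γ) {θ : ℝ} (hθ : 0 < θ)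
    (hθ1 : ρmin * θ < 1) :
    ∃ w, p ∈ wordMap s w '' Γ ∧ ρmin * θ < wordRatio ρ w ∧ wordRatio ρ w ≤ θ := by
  have : Nonempty ι := by
    obtain ⟨i, -⟩ := mem_iUnion.1 (hattr ▸ hp)
    exact ⟨i⟩
  obtain ⟨i₀, hi₀⟩ := Finite.exists_max ρ
  obtain ⟨k, hk⟩ := exists_pow_lt_of_lt_one hθ (hρ i₀).2
  -- Below scale `1`, write `p = s i p'` and look for `p'` at the coarser scale `θ / ρ i`.
  induction k generalizing p θ with
  | zero => exact ⟨[], by simpa using hp, by simpa using hθ1, by simpa using hk.le⟩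
  | succ k ih =>
    by_cases hθ' : 1 ≤ θ
    · exact ⟨[], by simpa using hp, by simpa using hθ1, by simpa using hθ'⟩
    obtain ⟨i, p', hp', rfl⟩ := mem_iUnion.1 (hattr ▸ hp)
    have hρi := (hρ i).1
    obtain ⟨w, hw, hlow, hup⟩ := ih hp' (θ := θ / ρ i) (div_pos hθ hρi)
      (by rw [mul_div_assoc', div_lt_one hρi]; nlinarith [hρmin i])
      (by rw [lt_div_iff₀ hρi]; nlinarith [hi₀ i, pow_pos (hρ i₀).1 k, pow_succ (ρ i₀) k])
    refine ⟨i :: w, ?_, ?_, ?_⟩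
    · rw [wordMap_cons, image_comp]
      exact mem_image_of_mem _ hw
    · rw [wordRatio_cons, ← div_lt_iff₀' hρi, mul_div_assoc]
      exact hlow
    · rw [wordRatio_cons, ← le_div_iff₀' hρi]
      exact hup

theorem exists_wordMap_mem_of_ball_subset [MetricSpace X] [Finite ι] (hρ : ∀ i, ρ i ∈ Ioo 0 1)
    (hsim : ∀ i, IsSimilarity (ρ i) (s i)) (hattr : Γ = ⋃ i, s i '' Γ)
    (hΓ : Bornology.IsBounded Γ) {p : X} {a : ℝ} (ha : 0 < a) (hball : ball p a ⊆ Γ) :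
    ∃ v : List ι, ∀ x γ, γ ∈ Γ → dist x γ ≤ 1 → wordMap s v x ∈ Γ := by
  set L := diam Γ + 1
  have hL : 0 < L := by positivity
  obtain ⟨v, ⟨u, hu, rfl⟩, -, hv⟩ := exists_word_mem_image hρ hattr (ρmin := 0)
    (fun i => (hρ i).1.le) (hball (mem_ball_self ha)) (θ := a / (2 * L)) (by positivity)
    (by simp)
  refine ⟨v, fun x γ hγ hxγ => hball ?_⟩
  have hF := IsSimilarity.wordMap hsim v
  calc dist (wordMap s v x) (wordMap s v u)
      ≤ dist (wordMap s v x) (wordMap s v γ) + dist (wordMap s v γ) (wordMap s v u) :=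
        dist_triangle _ _ _
    _ = wordRatio ρ v * (dist x γ + dist γ u) := by rw [hF, hF]; ring
    _ ≤ a / (2 * L) * L := by
        gcongr
        linarith [dist_le_diam_of_mem hΓ hγ hu]
    _ < a := by field_simp; linarith

end Words

section Hutchinson

variable {X ι : Type*} {s : ι → X → X} {ρ : ι → ℝ} {Γ A : Set X}

def hutchinson (s : ι → X → X) (A : Set X) : Set X := ⋃ i, s i '' A

theorem hutchinson_iterate_subset (h : hutchinson s A ⊆ A) (k : ℕ) :
    (hutchinson s)^[k] A ⊆ A := by
  induction k with
  | zero => exact subset_rfl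
  | succ k ih =>
    rw [Function.iterate_succ_apply']
    exact (iUnion_mono fun i => image_mono ih).trans h

theorem exists_dist_le_of_mem_hutchinson_iterate [MetricSpace X]
    (hsim : ∀ i, IsSimilarity (ρ i) (s i)) (hinv : ∀ i, s i '' Γ ⊆ Γ) {q : ℝ} (hq0 : 0 ≤ q)
    (hq : ∀ i, ρ i ≤ q) {C : ℝ} (hA : ∀ a ∈ A, ∃ γ ∈ Γ, dist a γ ≤ C) (k : ℕ) :
    ∀ y ∈ (hutchinson s)^[k] A, ∃ γ ∈ Γ, dist y γ ≤ q ^ k * C := by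
  induction k with
  | zero => simpa using hA
  | succ k ih =>
    intro y hy
    rw [Function.iterate_succ_apply'] at hy
    obtain ⟨i, a, ha, rfl⟩ := mem_iUnion.1 hy
    obtain ⟨γ, hγ, hd⟩ := ih a ha
    refine ⟨s i γ, hinv i (mem_image_of_mem _ hγ), ?_⟩
    rw [hsim, pow_succ', mul_assoc]
    exact mul_le_mul (hq i) hd dist_nonneg hq0

end Hutchinson

theorem measure_inter_null_of_sum_le_measure_iUnion {α ι : Type*} [MeasurableSpace α]
    {μ : Measure α} [Fintype ι] {A : ι → Set α} (hA : ∀ i, MeasurableSet (A i))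
    (hfin : ∀ i, μ (A i) ≠ ⊤) (hsum : ∑ i, μ (A i) ≤ μ (⋃ i, A i)) {i j : ι} (hij : i ≠ j) :
    μ (A i ∩ A j) = 0 := by
  classical
  set B := ⋃ k ∈ Finset.univ.erase i, A k
  have hU : ⋃ k, A k = A i ∪ B := by
    rw [← Finset.set_biUnion_insert, Finset.insert_erase (Finset.mem_univ i)]
    simp
  have hUfin : μ (A i ∪ B) ≠ ⊤ := by
    rw [← hU]
    exact ((measure_iUnion_fintype_le μ A).trans_lt
      (ENNReal.sum_lt_top.2 fun k _ => (hfin k).lt_top)).ne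
  have key : μ (A i ∪ B) + μ (A i ∩ B) ≤ μ (A i ∪ B) + 0 :=
    calc μ (A i ∪ B) + μ (A i ∩ B) = μ (A i) + μ B := measure_union_add_inter' (hA i) B
      _ ≤ μ (A i) + ∑ k ∈ Finset.univ.erase i, μ (A k) := by
          gcongr
          exact measure_biUnion_finset_le _ _
      _ = ∑ k, μ (A k) := Finset.add_sum_erase _ (fun k => μ (A k)) (Finset.mem_univ i)
      _ ≤ μ (A i ∪ B) := hU ▸ hsum
      _ = μ (A i ∪ B) + 0 := (add_zero _).symm
  refine measure_mono_null (inter_subset_inter_right _ ?_)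
    (nonpos_iff_eq_zero.1 (ENNReal.le_of_add_le_add_left hUfin key))
  exact subset_biUnion_of_mem (u := A) (Finset.mem_erase.2 ⟨hij.symm, Finset.mem_univ j⟩)

section SelfSimilar

variable {E : Type*} [NormedAddCommGroup E] [InnerProductSpace ℝ E] [FiniteDimensional ℝ E]
  [MeasurableSpace E] [BorelSpace E] {ι : Type*} [Fintype ι] {s : ι → E → E} {ρ : ι → ℝ}
  {Γ : Set E}

theorem sum_volume_image (hρ : ∀ i, ρ i ∈ Ioo 0 1) (hsim : ∀ i, IsSimilarity (ρ i) (s i))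
    (hsum : ∑ i, ρ i ^ finrank ℝ E = 1) (A : Set E) : ∑ i, volume (s i '' A) = volume A := by
  rw [Finset.sum_congr rfl fun i _ => (hsim i).volume_image (hρ i).1 A, ← Finset.sum_mul,
    ← ENNReal.ofReal_sum_of_nonneg fun i _ => pow_nonneg (hρ i).1.le _, hsum, ENNReal.ofReal_one,
    one_mul]

theorem measurableSet_hutchinson_iterate (hρ : ∀ i, ρ i ∈ Ioo 0 1)
    (hsim : ∀ i, IsSimilarity (ρ i) (s i)) {A : Set E} (hA : MeasurableSet A) (k : ℕ) :
    MeasurableSet ((hutchinson s)^[k] A) := by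
  induction k with
  | zero => exact hA
  | succ k ih =>
    rw [Function.iterate_succ_apply']
    exact .iUnion fun i => ((hsim i).measurableEmbedding (hρ i).1).measurableSet_image' ih

theorem volume_hutchinson_iterate (hρ : ∀ i, ρ i ∈ Ioo 0 1) (hsim : ∀ i, IsSimilarity (ρ i) (s i))
    (hsum : ∑ i, ρ i ^ finrank ℝ E = 1) {O : Set E} (hO : MeasurableSet O)
    (hOsub : hutchinson s O ⊆ O) (hOdisj : Pairwise fun i j => Disjoint (s i '' O) (s j '' O))
    (k : ℕ) :
    volume ((hutchinson s)^[k] O) = volume O := by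
  induction k with
  | zero => rfl
  | succ k ih =>
    have hsub := hutchinson_iterate_subset hOsub k
    rw [Function.iterate_succ_apply', hutchinson, measure_iUnion, tsum_fintype,
      sum_volume_image hρ hsim hsum, ih]
    · exact fun i j hij => (hOdisj hij).mono (image_mono hsub) (image_mono hsub)
    · exact fun i => ((hsim i).measurableEmbedding (hρ i).1).measurableSet_image'
        (measurableSet_hutchinson_iterate hρ hsim hO k)

theorem subset_of_openSetCondition (hρ : ∀ i, ρ i ∈ Ioo 0 1) (hsim : ∀ i, IsSimilarity (ρ i) (s i))
    (hsum : ∑ i, ρ i ^ finrank ℝ E = 1) (hΓne : Γ.Nonempty) (hΓ : IsCompact Γ)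
    (hattr : Γ = ⋃ i, s i '' Γ) {O : Set E} (hO : IsOpen O) (hOb : Bornology.IsBounded O)
    (hOsub : hutchinson s O ⊆ O) (hOdisj : Pairwise fun i j => Disjoint (s i '' O) (s j '' O)) :
    O ⊆ Γ := by
  intro p hpO
  by_contra hpΓ
  obtain ⟨ε, hε, hball⟩ := Metric.isOpen_iff.1 (hO.inter hΓ.isClosed.isOpen_compl) p ⟨hpO, hpΓ⟩
  obtain ⟨γ₀, hγ₀⟩ := hΓne
  have : Nonempty ι := by
    obtain ⟨i, -⟩ := mem_iUnion.1 (hattr ▸ hγ₀)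
    exact ⟨i⟩
  obtain ⟨i₀, hi₀⟩ := Finite.exists_max ρ
  set C := diam (O ∪ Γ)
  obtain ⟨k, hk⟩ : ∃ k, ρ i₀ ^ k * C < ε / 2 := by
    have := (tendsto_pow_atTop_nhds_zero_of_lt_one (hρ i₀).1.le (hρ i₀).2).mul_const C
    rw [zero_mul] at this
    exact (this.eventually (gt_mem_nhds (half_pos hε))).exists
  have hnear := exists_dist_le_of_mem_hutchinson_iterate hsim (image_subset_of_eq_iUnion hattr)
    (hρ i₀).1.le hi₀ (A := O) (C := C) (fun a ha => ⟨γ₀, hγ₀,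
      dist_le_diam_of_mem (hOb.union hΓ.isBounded) (Or.inl ha) (Or.inr hγ₀)⟩) k
  have hsub : ball p (ε / 2) ⊆ O \ (hutchinson s)^[k] O := by
    intro y hy
    refine ⟨(hball (ball_subset_ball (half_le_self hε.le) hy)).1, fun hyk => ?_⟩
    obtain ⟨γ, hγ, hyγ⟩ := hnear y hyk
    have hpγ : dist γ p < ε := by
      linarith [dist_triangle γ y p, dist_comm γ y, mem_ball.1 hy]
    exact (hball (mem_ball.2 hpγ)).2 hγ
  have hvol := volume_hutchinson_iterate hρ hsim hsum hO.measurableSet hOsub hOdisj k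
  have hnull : volume (O \ (hutchinson s)^[k] O) = 0 := by
    rw [measure_sdiff (hutchinson_iterate_subset hOsub k)
      (measurableSet_hutchinson_iterate hρ hsim hO.measurableSet k).nullMeasurableSet
      (hvol ▸ hOb.measure_lt_top.ne), hvol, tsub_self]
  exact (measure_ball_pos volume p (half_pos hε)).ne' (measure_mono_null hsub hnull)

theorem volume_image_inter_image_null (hρ : ∀ i, ρ i ∈ Ioo 0 1)
    (hsim : ∀ i, IsSimilarity (ρ i) (s i)) (hsum : ∑ i, ρ i ^ finrank ℝ E = 1) (hΓ : IsCompact Γ)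
    (hattr : Γ = ⋃ i, s i '' Γ) {i j : ι} (hij : i ≠ j) :
    volume (s i '' Γ ∩ s j '' Γ) = 0 := by
  refine measure_inter_null_of_sum_le_measure_iUnion
    (fun i => ((hsim i).measurableEmbedding (hρ i).1).measurableSet_image' hΓ.measurableSet)
    (fun i => ?_) (by rw [sum_volume_image hρ hsim hsum, ← hattr]) hij
  rw [(hsim i).volume_image (hρ i).1]
  exact ENNReal.mul_ne_top ENNReal.ofReal_ne_top hΓ.measure_lt_top.ne

theorem volume_wordMap_image_inter_null (hρ : ∀ i, ρ i ∈ Ioo 0 1)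
    (hsim : ∀ i, IsSimilarity (ρ i) (s i)) (hsum : ∑ i, ρ i ^ finrank ℝ E = 1) (hΓ : IsCompact Γ)
    (hattr : Γ = ⋃ i, s i '' Γ) {w v : List ι} (hwv : ¬w <+: v) (hvw : ¬v <+: w) :
    volume (wordMap s w '' Γ ∩ wordMap s v '' Γ) = 0 := by
  induction w generalizing v with
  | nil => exact absurd List.nil_prefix hwv
  | cons i w ih =>
    cases v with
    | nil => exact absurd List.nil_prefix hvw
    | cons j v =>
      simp only [wordMap_cons, image_comp]
      by_cases hij : i = j
      · subst hij
        rw [← image_inter ((hsim i).injective (hρ i).1), (hsim i).volume_image (hρ i).1,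
          ih (fun h => hwv (List.cons_prefix_cons.2 ⟨rfl, h⟩))
            (fun h => hvw (List.cons_prefix_cons.2 ⟨rfl, h⟩)), mul_zero]
      · have hinv := image_subset_of_eq_iUnion hattr
        exact measure_mono_null (inter_subset_inter (image_mono (wordMap_image_subset hinv w))
          (image_mono (wordMap_image_subset hinv v)))
          (volume_image_inter_image_null hρ hsim hsum hΓ hattr hij)

theorem exists_word_subset_closedBall_volume_inter_null (hρ : ∀ i, ρ i ∈ Ioo 0 1)
    (hsim : ∀ i, IsSimilarity (ρ i) (s i)) (hsum : ∑ i, ρ i ^ finrank ℝ E = 1) (hΓ : IsCompact Γ)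
    (hattr : Γ = ⋃ i, s i '' Γ) {ρmin : ℝ} (hρmin : ∀ i, ρmin ≤ ρ i) {v : List ι} {y : E}
    (hy : y ∈ Γ) (hyv : y ∉ wordMap s v '' Γ) {θ : ℝ} (hθ : 0 < θ) (hθv : θ < wordRatio ρ v)
    (hθ1 : ρmin * θ < 1) :
    ∃ w, ρmin * θ < wordRatio ρ w ∧ wordMap s w '' Γ ⊆ closedBall y (θ * diam Γ) ∧
      volume (wordMap s w '' Γ ∩ wordMap s v '' Γ) = 0 := by
  obtain ⟨w, ⟨u, hu, rfl⟩, hlow, hup⟩ := exists_word_mem_image hρ hattr hρmin hy hθ hθ1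
  refine ⟨w, hlow, ((IsSimilarity.wordMap hsim w).image_subset_closedBall
    (wordRatio_pos (fun i => (hρ i).1) w).le hΓ.isBounded hu).trans
    (closedBall_subset_closedBall (mul_le_mul_of_nonneg_right hup diam_nonneg)),
    volume_wordMap_image_inter_null hρ hsim hsum hΓ hattr (fun h => ?_) (fun h => ?_)⟩
  · exact (hup.trans_lt hθv).not_ge (wordRatio_le_of_prefix hρ h)
  · exact hyv (wordMap_image_subset_of_prefix (image_subset_of_eq_iUnion hattr) h
      (mem_image_of_mem _ hu))

theorem le_volume_compl_inter_closedBall (hρ : ∀ i, ρ i ∈ Ioo 0 1)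
    (hsim : ∀ i, IsSimilarity (ρ i) (s i)) (hsum : ∑ i, ρ i ^ finrank ℝ E = 1) (hΓ : IsCompact Γ)
    (hattr : Γ = ⋃ i, s i '' Γ) {i₀ : ι} (hi₀ : ∀ i, ρ i₀ ≤ ρ i) {v : List ι} {x : E}
    (hx : x ∉ Γ) (hvx : wordMap s v x ∈ Γ) {r : ℝ} (hr : 0 < r) (hr1 : r ≤ 1) :
    ENNReal.ofReal ((ρ i₀ / (2 * (diam Γ + 1)) * r) ^ finrank ℝ E) * volume Γ ≤
      volume (Γᶜ ∩ closedBall x r) := by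
  set F := wordMap s v
  set ρv := wordRatio ρ v
  set L := diam Γ + 1
  set θ := ρv * r / (2 * L)
  have hF : IsSimilarity ρv F := IsSimilarity.wordMap hsim v
  have hρv : 0 < ρv := wordRatio_pos (fun i => (hρ i).1) v
  have hρv1 : ρv ≤ 1 := wordRatio_le_one hρ v
  have hL : 1 ≤ L := le_add_of_nonneg_left diam_nonneg
  have hθ : 0 < θ := by positivity
  have hθ2L : θ * (2 * L) = ρv * r := div_mul_cancel₀ _ (by positivity)
  have hθv : θ < ρv := by nlinarith
  obtain ⟨hρ₀, hρ₁⟩ := hρ i₀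
  obtain ⟨w, hlow, hwsub, hnull⟩ := exists_word_subset_closedBall_volume_inter_null hρ hsim hsum
    hΓ hattr hi₀ hvx (fun ⟨u, hu, h⟩ => hx (hF.injective hρv h ▸ hu)) hθ hθv
    (by nlinarith [mul_pos hρ₀ hθ])
  have hwball : wordMap s w '' Γ ⊆ closedBall (F x) (ρv * r) :=
    hwsub.trans (closedBall_subset_closedBall (by nlinarith [diam_nonneg (s := Γ)]))
  have hpull : wordMap s w '' Γ \ F '' Γ ⊆ F '' (Γᶜ ∩ closedBall x r) := fun y hy =>
    hF.compl_image_inter_closedBall_subset hρv Γ x r ⟨hy.2, hwball hy.1⟩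
  have hρvd : ENNReal.ofReal (ρv ^ finrank ℝ E) ≠ 0 := (ENNReal.ofReal_pos.2 (by positivity)).ne'
  refine (ENNReal.mul_le_mul_iff_right hρvd ENNReal.ofReal_ne_top).1 ?_
  calc ENNReal.ofReal (ρv ^ finrank ℝ E) *
        (ENNReal.ofReal ((ρ i₀ / (2 * L) * r) ^ finrank ℝ E) * volume Γ)
      = ENNReal.ofReal ((ρ i₀ * θ) ^ finrank ℝ E) * volume Γ := by
        rw [← mul_assoc, ← ENNReal.ofReal_mul (by positivity), ← mul_pow]
        congr 3
        ring
    _ ≤ ENNReal.ofReal (wordRatio ρ w ^ finrank ℝ E) * volume Γ := by gcongr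
    _ = volume (wordMap s w '' Γ) :=
        ((IsSimilarity.wordMap hsim w).volume_image (wordRatio_pos (fun i => (hρ i).1) w) Γ).symm
    _ = volume (wordMap s w '' Γ \ F '' Γ) := (measure_sdiff_null' hnull).symm
    _ ≤ volume (F '' (Γᶜ ∩ closedBall x r)) := measure_mono hpull
    _ = ENNReal.ofReal (ρv ^ finrank ℝ E) * volume (Γᶜ ∩ closedBall x r) :=
        hF.volume_image hρv _

theorem exists_pos_le_volume_compl_inter_closedBall (hρ : ∀ i, ρ i ∈ Ioo 0 1)
    (hsim : ∀ i, IsSimilarity (ρ i) (s i)) (hsum : ∑ i, ρ i ^ finrank ℝ E = 1) (hΓ : IsCompact Γ)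
    (hattr : Γ = ⋃ i, s i '' Γ) (hint : (interior Γ).Nonempty) :
    ∃ c > 0, ∀ x ∉ Γ, ∀ r, 0 < r → r ≤ 1 →
      ENNReal.ofReal (c * r ^ finrank ℝ E) ≤ volume (Γᶜ ∩ closedBall x r) := by
  obtain ⟨p, hp⟩ := hint
  obtain ⟨a, ha, hball⟩ := Metric.mem_nhds_iff.1 (mem_interior_iff_mem_nhds.1 hp)
  obtain ⟨v, hv⟩ := exists_wordMap_mem_of_ball_subset hρ hsim hattr hΓ.isBounded ha hball
  have : Nonempty ι := by
    obtain ⟨i, -⟩ := mem_iUnion.1 (hattr ▸ interior_subset hp)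
    exact ⟨i⟩
  obtain ⟨i₀, hi₀⟩ := Finite.exists_min ρ
  set ω := (volume (ball (0 : E) 1)).toReal
  set c₀ := (ρ i₀ / (2 * (diam Γ + 1))) ^ finrank ℝ E * (volume Γ).toReal
  have hV : 0 < (volume Γ).toReal := ENNReal.toReal_pos
    ((isOpen_interior.measure_pos volume ⟨p, hp⟩).trans_le (measure_mono interior_subset)).ne'
    hΓ.measure_lt_top.ne
  have hω : 0 < ω := ENNReal.toReal_pos (measure_ball_pos _ _ one_pos).ne' measure_ball_lt_top.ne
  have hρ₀ := (hρ i₀).1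
  refine ⟨min c₀ ω, lt_min (by positivity) hω, fun x hx r hr hr1 => ?_⟩
  by_cases hnear : ∃ γ ∈ Γ, dist x γ ≤ r
  · obtain ⟨γ, hγ, hxγ⟩ := hnear
    refine le_trans ?_ (le_volume_compl_inter_closedBall hρ hsim hsum hΓ hattr hi₀ hx
      (hv x γ hγ (hxγ.trans hr1)) hr hr1)
    rw [← ENNReal.ofReal_toReal hΓ.measure_lt_top.ne, ← ENNReal.ofReal_mul (by positivity),
      mul_pow, mul_right_comm]
    gcongr
    exact min_le_left _ _
  · have hB : closedBall x r ⊆ Γᶜ := fun y hy hyΓ =>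
      hnear ⟨y, hyΓ, by rw [dist_comm]; exact mem_closedBall.1 hy⟩
    rw [inter_eq_right.2 hB, Measure.addHaar_closedBall _ _ hr.le,
      ← ENNReal.ofReal_toReal measure_ball_lt_top.ne, ← ENNReal.ofReal_mul (by positivity),
      mul_comm]
    gcongr
    exact min_le_right _ _

end SelfSimilar

theorem statement6_general
    (n : ℕ)
    (M : ℕ)
    (s : Fin M → EuclideanSpace ℝ (Fin n) → EuclideanSpace ℝ (Fin n))
    (ρ : Fin M → ℝ)
    (hρ : ∀ m, ρ m ∈ Set.Ioo (0 : ℝ) 1)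
    (hsim : ∀ m x y, dist (s m x) (s m y) = ρ m * dist x y)
    (Γ : Set (EuclideanSpace ℝ (Fin n)))
    (hΓne : Γ.Nonempty) (hΓcomp : IsCompact Γ)
    (hattr : Γ = ⋃ m, s m '' Γ)
    (hOSC : ∃ O : Set (EuclideanSpace ℝ (Fin n)), O.Nonempty ∧ IsOpen O ∧
      Bornology.IsBounded O ∧ (⋃ m, s m '' O) ⊆ O ∧
      ∀ m m', m ≠ m' → Disjoint (s m '' O) (s m' '' O))
    (hsum : ∑ m, ρ m ^ n = 1) :
    ∃ c : ℝ, 0 < c ∧ ∀ x ∈ Γᶜ, ∀ r : ℝ, 0 < r → r ≤ 1 →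
      ENNReal.ofReal (c * r ^ n) ≤ volume (Γᶜ ∩ Metric.closedBall x r) := by
  obtain ⟨O, ⟨p, hpO⟩, hO, hOb, hOsub, hOdisj⟩ := hOSC
  have hsum' : ∑ m, ρ m ^ finrank ℝ (EuclideanSpace ℝ (Fin n)) = 1 := by
    rwa [finrank_euclideanSpace_fin]
  have hOΓ := subset_of_openSetCondition hρ hsim hsum' hΓne hΓcomp hattr hO hOb hOsub hOdisj
  obtain ⟨c, hc, hdens⟩ := exists_pos_le_volume_compl_inter_closedBall hρ hsim hsum' hΓcomp hattr
    ⟨p, interior_maximal hOΓ hO hpO⟩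
  refine ⟨c, hc, fun x hx r hr hr1 => ?_⟩
  simpa only [finrank_euclideanSpace_fin] using hdens x hx r hr hr1

/-- If Γ is an n-attractor then the complement Γᶜ = ℝⁿ ∖ Γ is an
open n-set: there exists c > 0 such that c·rⁿ ≤ |Γᶜ ∩ B(x,r)| for all x ∈ Γᶜ
and all 0 < r ≤ 1. -/
theorem statement6
    (n : ℕ) (hn : 1 ≤ n)
    (M : ℕ) (hM : 2 ≤ M)
    (s : Fin M → EuclideanSpace ℝ (Fin n) → EuclideanSpace ℝ (Fin n))
    (ρ : Fin M → ℝ)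
    (hρ : ∀ m, ρ m ∈ Set.Ioo (0 : ℝ) 1)
    (hsim : ∀ m x y, dist (s m x) (s m y) = ρ m * dist x y)
    (Γ : Set (EuclideanSpace ℝ (Fin n)))
    (hΓne : Γ.Nonempty) (hΓcomp : IsCompact Γ)
    (hattr : Γ = ⋃ m, s m '' Γ)
    (hOSC : ∃ O : Set (EuclideanSpace ℝ (Fin n)), O.Nonempty ∧ IsOpen O ∧
      Bornology.IsBounded O ∧ (⋃ m, s m '' O) ⊆ O ∧
      ∀ m m', m ≠ m' → Disjoint (s m '' O) (s m' '' O))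
    (hsum : ∑ m, ρ m ^ n = 1) :
    ∃ c : ℝ, 0 < c ∧ ∀ x ∈ Γᶜ, ∀ r : ℝ, 0 < r → r ≤ 1 →
      ENNReal.ofReal (c * r ^ n) ≤ volume (Γᶜ ∩ Metric.closedBall x r) :=
  statement6_general n M s ρ hρ hsim Γ hΓne hΓcomp hattr hOSC hsum
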